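/- Let m be odd, m ≥ 9, m = 2k+1, with m divisible by 3. Then the 2m arcs (x_{k+i}, y_{k+2i}) and (y_{2k+2i}, x_i), i ∈ Z_m (subscripts mod m), form exactly three vertex-disjoint directed cycles, each of length 2m/3. -/

import Mathlib

/-!
Following an arc out of `x_a` and then the arc out of the resulting `y`-vertex leads to
`x_{a + 3k²}`, and `3k² = 3 · 4⁻¹` has additive order `m / 3` in `ZMod m`. So the orbit of the
successor map through any `x`-vertex alternates between `x`- and `y`-vertices and has length
`2m / 3`. The residue mod 3 of the `x`-index is constant along arcs, so the orbits through
`x_0`, `x_1`, `x_2` are pairwise disjoint, and together they have `2m` vertices, i.e. all of them.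
-/

/-- The `2m` leftover arcs of mixed differences of the Construction:
`(x_{k+i}, y_{k+2i})` and `(y_{2k+2i}, x_i)` for `i ∈ Z_m`, where `x`-vertices
are `Sum.inl` and `y`-vertices are `Sum.inr`. -/
def leftoverArcs (m k : ℕ) : Set ((ZMod m ⊕ ZMod m) × (ZMod m ⊕ ZMod m)) :=
  {p | ∃ i : ZMod m,
    p = (Sum.inl ((k : ZMod m) + i), Sum.inr ((k : ZMod m) + 2 * i)) ∨
    p = (Sum.inr (2 * (k : ZMod m) + 2 * i), Sum.inl i)}

open Function

namespace Function

variable {α β : Type*}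

theorem minimalPeriod_eq_of_semiconj {fa : α → α} {fb : β → β} {g : α → β} (hg : Injective g)
    (h : Semiconj g fa fb) (x : α) : minimalPeriod fb (g x) = minimalPeriod fa x := by
  refine minimalPeriod_eq_minimalPeriod_iff.mpr fun n => ?_
  simp only [IsPeriodicPt, IsFixedPt, ← (h.iterate_right n).eq x, hg.eq_iff]

theorem minimalPeriod_add_left {G : Type*} [AddGroup G] (d a : G) :
    minimalPeriod (d + ·) a = addOrderOf d := by
  have := minimalPeriod_eq_of_semiconj (add_left_injective a)
    (fun x => add_assoc d x a : Semiconj (· + a) (d + ·) (d + ·)) 0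
  rwa [zero_add] at this

theorem minimalPeriod_eq_two_mul_of_semiconj_not {f : α → α} {p : α → Bool}
    (hp : Semiconj p f not) (x : α) : minimalPeriod f x = 2 * minimalPeriod f^[2] x := by
  have heven : Even (minimalPeriod f x) := by
    by_contra hodd
    rw [Nat.not_even_iff_odd] at hodd
    have := (hp.iterate_right (minimalPeriod f x)).eq x
    rw [iterate_minimalPeriod, Bool.involutive_not.iterate_odd hodd] at this
    exact Bool.not_ne_self _ this.symm
  rw [minimalPeriod_iterate_eq_div_gcd two_ne_zero, Nat.gcd_eq_right (even_iff_two_dvd.mp heven),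
    Nat.mul_div_cancel' (even_iff_two_dvd.mp heven)]

section Orbit

variable {f : α → α} {x : α} {n : ℕ} [NeZero n]

theorem injective_iterate_zmodVal (h : minimalPeriod f x = n) :
    Injective fun t : ZMod n => f^[t.val] x := fun t t' htt' =>
  ZMod.val_injective n <| iterate_injOn_Iio_minimalPeriod (h ▸ t.val_lt) (h ▸ t'.val_lt) htt'

theorem iterate_zmodVal_add_one (h : minimalPeriod f x = n) (t : ZMod n) :
    f^[(t + 1).val] x = f (f^[t.val] x) := by
  subst h
  rw [ZMod.val_add, ZMod.val_one_eq_one_mod, Nat.add_mod_mod, iterate_mod_minimalPeriod_eq,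
    iterate_succ_apply']

end Orbit

end Function

namespace Set

variable {ι β α : Type*}

theorem injective_uncurry_of_pairwise_disjoint_range {c : ι → β → α} (hc : ∀ i, Injective (c i))
    (hdisj : Pairwise fun i j => Disjoint (range (c i)) (range (c j))) : Injective (uncurry c) := by
  rintro ⟨i, b⟩ ⟨j, b'⟩ h
  obtain rfl : i = j := by
    by_contra hij
    exact disjoint_left.mp (hdisj hij) ⟨b, rfl⟩ ⟨b', h.symm⟩
  exact Prod.ext rfl (hc i h)

theorem iUnion_range_eq_univ_of_injective_uncurry [Fintype ι] [Fintype β] [Fintype α]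
    {c : ι → β → α} (hc : Injective (uncurry c))
    (hcard : Fintype.card ι * Fintype.card β = Fintype.card α) : ⋃ i, range (c i) = univ := by
  have hsurj := ((Fintype.bijective_iff_injective_and_card _).mpr
    ⟨hc, by rw [Fintype.card_prod, hcard]⟩).surjective
  refine eq_univ_of_forall fun a => ?_
  obtain ⟨⟨i, b⟩, rfl⟩ := hsurj a
  exact mem_iUnion.mpr ⟨i, b, rfl⟩

end Set

open Sum

section Leftover

variable (m k : ℕ)

/-- The head of the unique arc of `leftoverArcs m k` leaving a vertex; at `y_b` it solves
`2k + 2i = b` using that `k + 1` inverts `2` in `ZMod (2k+1)`. -/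
def leftoverSucc : ZMod m ⊕ ZMod m → ZMod m ⊕ ZMod m
  | inl a => inr (k + 2 * (a - k))
  | inr b => inl ((k + 1) * (b - 2 * k))

/-- The residue mod 3 of the `x`-index of a vertex, or of its successor for a `y`-vertex.
It is invariant along arcs because two steps move `x_a` to `x_{a + 3k²}`. -/
def leftoverColor (h3 : 3 ∣ m) : ZMod m ⊕ ZMod m → ZMod 3
  | inl a => ZMod.castHom h3 (ZMod 3) a
  | inr b => ZMod.castHom h3 (ZMod 3) ((k + 1) * (b - 2 * k))

variable {m k}

theorem two_mul_natCast_add_one_eq_zero (hm : m = 2 * k + 1) : 2 * (k : ZMod m) + 1 = 0 := by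
  have : ((2 * k + 1 : ℕ) : ZMod m) = 0 := hm ▸ ZMod.natCast_self m
  exact_mod_cast this

theorem semiconj_isLeft_leftoverSucc : Semiconj isLeft (leftoverSucc m k) not := by
  rintro (a | b) <;> rfl

theorem leftoverSucc_mem_leftoverArcs (hm : m = 2 * k + 1) (v : ZMod m ⊕ ZMod m) :
    (v, leftoverSucc m k v) ∈ leftoverArcs m k := by
  have hk := two_mul_natCast_add_one_eq_zero hm
  cases v with
  | inl a => exact ⟨a - k, Or.inl (by simp only [leftoverSucc]; ring_nf)⟩
  | inr b =>
    refine ⟨(k + 1) * (b - 2 * k), Or.inr ?_⟩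
    simp only [leftoverSucc, Prod.mk.injEq, inr.injEq, and_true]
    linear_combination (2 * k - b) * hk

theorem leftoverSucc_iterate_two_inl (hm : m = 2 * k + 1) (a : ZMod m) :
    (leftoverSucc m k)^[2] (inl a) = inl (3 * k ^ 2 + a) := by
  have hk := two_mul_natCast_add_one_eq_zero hm
  simp only [iterate_succ, iterate_zero, comp_apply, id, leftoverSucc, inl.injEq]
  linear_combination (a - 3 * k) * hk

theorem addOrderOf_three_mul_sq (hm : m = 2 * k + 1) (h3 : 3 ∣ m) :
    addOrderOf (3 * (k : ZMod m) ^ 2) = m / 3 := by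
  have hcop : Nat.Coprime (m / 3) (k ^ 2) :=
    Nat.Coprime.pow_right 2 <| Nat.Coprime.coprime_dvd_left (Nat.div_dvd_of_dvd h3)
      (hm ▸ by simp [Nat.coprime_comm])
  have hgcd : m.gcd (3 * k ^ 2) = 3 := by
    rw [← Nat.mul_div_cancel' h3, Nat.gcd_mul_left, hcop, mul_one]
  rw [show 3 * (k : ZMod m) ^ 2 = ((3 * k ^ 2 : ℕ) : ZMod m) by push_cast; rfl,
    ZMod.addOrderOf_coe _ (by omega), hgcd]

theorem minimalPeriod_leftoverSucc_inl (hm : m = 2 * k + 1) (h3 : 3 ∣ m) (a : ZMod m) :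
    minimalPeriod (leftoverSucc m k) (inl a) = 2 * m / 3 := by
  have hsq : Semiconj inl (3 * (k : ZMod m) ^ 2 + ·) (leftoverSucc m k)^[2] :=
    fun a => (leftoverSucc_iterate_two_inl hm a).symm
  rw [minimalPeriod_eq_two_mul_of_semiconj_not semiconj_isLeft_leftoverSucc,
    minimalPeriod_eq_of_semiconj inl_injective hsq, minimalPeriod_add_left,
    addOrderOf_three_mul_sq hm h3]
  omega

theorem leftoverColor_leftoverSucc (hm : m = 2 * k + 1) (h3 : 3 ∣ m) (v : ZMod m ⊕ ZMod m) :
    leftoverColor m k h3 (leftoverSucc m k v) = leftoverColor m k h3 v := by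
  cases v with
  | inl a =>
    have hx : ((k : ZMod m) + 1) * (k + 2 * (a - k) - 2 * k) = 3 * k ^ 2 + a := by
      linear_combination (a - 3 * k) * two_mul_natCast_add_one_eq_zero hm
    simp only [leftoverColor, leftoverSucc, hx, map_add, map_mul, map_pow, map_ofNat]
    rw [show (3 : ZMod 3) = 0 from rfl, zero_mul, zero_add]
  | inr b => rfl

theorem leftoverColor_iterate (hm : m = 2 * k + 1) (h3 : 3 ∣ m) (n : ℕ) (v : ZMod m ⊕ ZMod m) :
    leftoverColor m k h3 ((leftoverSucc m k)^[n] v) = leftoverColor m k h3 v := by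
  induction n with
  | zero => rfl
  | succ n ih => rw [iterate_succ_apply', leftoverColor_leftoverSucc hm h3, ih]

theorem leftoverColor_inl_natCast (h3 : 3 ∣ m) (j : Fin 3) :
    leftoverColor m k h3 (inl ((j : ℕ) : ZMod m)) = (j : ZMod 3) := by
  simp only [leftoverColor, map_natCast]
  exact Fin.cast_val_eq_self j

end Leftover

theorem leftover_three_cycles_general (m k : ℕ) (hm : m = 2 * k + 1)
    (h3 : 3 ∣ m) :
    ∃ c : Fin 3 → ZMod (2 * m / 3) → ZMod m ⊕ ZMod m,
      (∀ j, Function.Injective (c j)) ∧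
      (∀ j (t : ZMod (2 * m / 3)), (c j t, c j (t + 1)) ∈ leftoverArcs m k) ∧
      (Pairwise fun j j' => Disjoint (Set.range (c j)) (Set.range (c j'))) ∧
      (⋃ j, Set.range (c j)) = Set.univ := by
  have : NeZero m := ⟨by omega⟩
  have : NeZero (2 * m / 3) := ⟨by omega⟩
  set c : Fin 3 → ZMod (2 * m / 3) → ZMod m ⊕ ZMod m :=
    fun j t => (leftoverSucc m k)^[t.val] (inl ((j : ℕ) : ZMod m))
  have hperiod (j : Fin 3) := minimalPeriod_leftoverSucc_inl hm h3 ((j : ℕ) : ZMod m)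
  have hcolor (j : Fin 3) (t : ZMod (2 * m / 3)) : leftoverColor m k h3 (c j t) = j := by
    rw [leftoverColor_iterate hm h3, leftoverColor_inl_natCast]
  have hdisj : Pairwise fun j j' => Disjoint (Set.range (c j)) (Set.range (c j')) := by
    refine fun j j' hne => Set.disjoint_left.mpr ?_
    rintro _ ⟨t, rfl⟩ ⟨t', h⟩
    exact hne (by rw [← hcolor j t, ← h, hcolor])
  have hinj (j : Fin 3) : Injective (c j) := injective_iterate_zmodVal (hperiod j)
  have hstep (j : Fin 3) (t : ZMod (2 * m / 3)) : c j (t + 1) = leftoverSucc m k (c j t) :=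
    iterate_zmodVal_add_one (hperiod j) t
  refine ⟨c, hinj, fun j t => ?_, hdisj, ?_⟩
  · rw [hstep]
    exact leftoverSucc_mem_leftoverArcs hm _
  · refine Set.iUnion_range_eq_univ_of_injective_uncurry
      (Set.injective_uncurry_of_pairwise_disjoint_range hinj hdisj) ?_
    simp only [Fintype.card_fin, ZMod.card, Fintype.card_sum]
    omega

/-- For odd `m = 2k+1 ≥ 9` divisible by 3, the `2m` leftover arcs form exactly
three vertex-disjoint directed cycles, each of length `2m/3`, together covering
all vertices. -/
theorem leftover_three_cycles (m k : ℕ) (hm : m = 2 * k + 1) (h9 : 9 ≤ m)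
    (h3 : 3 ∣ m) :
    ∃ c : Fin 3 → ZMod (2 * m / 3) → ZMod m ⊕ ZMod m,
      (∀ j, Function.Injective (c j)) ∧
      (∀ j (t : ZMod (2 * m / 3)), (c j t, c j (t + 1)) ∈ leftoverArcs m k) ∧
      (Pairwise fun j j' => Disjoint (Set.range (c j)) (Set.range (c j'))) ∧
      (⋃ j, Set.range (c j)) = Set.univ :=
  leftover_three_cycles_general m k hm h3
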